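/- arXiv:1809.06777 — 10 statements merged into one kernel-verified Lean document; each statement's English description precedes it below -/
import Mathlib

section
/- Let f ∈ Γ₀(ℝ^n) be sparsity promoting and α > 0. Define f_α = f − env_{αf}, where env_{αf}(x) = inf_u { f(u) + (1/(2α))‖u−x‖² }. Then f_α is nonnegative, f_α(0) = 0 is its global minimum, and ∂f_α(0) = ∂f(0); in particular f_α is sparsity promoting. -/
/-!
Testing the envelope at `u = x` and at `u = 0` gives `0 ≤ env α f x ≤ min (f x) (‖x‖² / (2α))`.
The first bound makes `f_α = f - env α f` nonnegative and zero at `0`. The second says that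
`env α f` vanishes to second order at `0`, so subtracting it does not change the Fréchet
subgradients at `0`: those of `f_α` contain `∂f(0)`, and since `f_α ≤ f` with equality at `0`
they are Fréchet subgradients of the convex `f`, hence lie in `∂f(0)`.
-/

open Set
open scoped RealInnerProductSpace Pointwise

noncomputable section

abbrev E (n : ℕ) := EuclideanSpace ℝ (Fin n)

/-- Convex subdifferential. -/
def subdiff {n : ℕ} (f : E n → ℝ) (x : E n) : Set (E n) :=
  {d | ∀ y, f x + ⟪d, y - x⟫ ≤ f y}

/-- Fréchet subdifferential. -/
def fsubdiff {n : ℕ} (f : E n → ℝ) (x : E n) : Set (E n) :=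
  {d | ∀ ε > (0:ℝ), ∃ δ > (0:ℝ), ∀ u, ‖u - x‖ < δ →
    f x + ⟪d, u - x⟫ - ε * ‖u - x‖ ≤ f u}

/-- Sparsity promoting: value 0 at the origin is the global minimum and the
subdifferential at 0 contains a nonzero element. -/
def SparsityPromoting {n : ℕ} (f : E n → ℝ) : Prop :=
  f 0 = 0 ∧ (∀ x, f 0 ≤ f x) ∧ ∃ d ∈ subdiff f 0, d ≠ 0

/-- Moreau envelope with parameter `α`. -/
def env {n : ℕ} (α : ℝ) (f : E n → ℝ) (x : E n) : ℝ :=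
  sInf (Set.range fun u => f u + ‖u - x‖ ^ 2 / (2 * α))

/-- Proximity operator (as a set of minimizers). -/
def proxSet {n : ℕ} (α : ℝ) (f : E n → ℝ) (x : E n) : Set (E n) :=
  {p | ∀ u, f p + ‖p - x‖ ^ 2 / (2 * α) ≤ f u + ‖u - x‖ ^ 2 / (2 * α)}

section

variable {n : ℕ} {α m : ℝ} {f g : E n → ℝ} {x : E n}

theorem le_env (hf : ∀ u, m ≤ f u) (hα : 0 ≤ α) (x : E n) : m ≤ env α f x :=
  le_csInf (range_nonempty _) <| by
    rintro _ ⟨u, rfl⟩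
    exact le_add_of_le_of_nonneg (hf u) (by positivity)

theorem env_le (hf : BddBelow (range f)) (hα : 0 ≤ α) (x u : E n) :
    env α f x ≤ f u + ‖u - x‖ ^ 2 / (2 * α) := by
  obtain ⟨m, hm⟩ := hf
  have hbdd : BddBelow (range fun u => f u + ‖u - x‖ ^ 2 / (2 * α)) :=
    ⟨m, by
      rintro _ ⟨v, rfl⟩
      exact le_add_of_le_of_nonneg (hm ⟨v, rfl⟩) (by positivity)⟩
  exact csInf_le hbdd ⟨u, rfl⟩

theorem subdiff_subset_fsubdiff : subdiff f x ⊆ fsubdiff f x := by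
  intro d hd ε hε
  refine ⟨1, one_pos, fun u _ => ?_⟩
  linarith [hd u, mul_nonneg hε.le (norm_nonneg (u - x))]

theorem fsubdiff_subset_of_le (hle : ∀ u, g u ≤ f u) (hx : g x = f x) :
    fsubdiff g x ⊆ fsubdiff f x := by
  intro d hd ε hε
  obtain ⟨δ, hδ, H⟩ := hd ε hε
  exact ⟨δ, hδ, fun u hu => hx ▸ (H u hu).trans (hle u)⟩

theorem fsubdiff_subset_fsubdiff_sub {h : E n → ℝ} {c : ℝ} (hc : 0 < c) (hx : h x = 0)
    (hh : ∀ u, h u ≤ c * ‖u - x‖ ^ 2) :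
    fsubdiff f x ⊆ fsubdiff (fun u => f u - h u) x := by
  intro d hd ε hε
  obtain ⟨δ, hδ, H⟩ := hd (ε / 2) (half_pos hε)
  refine ⟨min δ (ε / (2 * c)), by positivity, fun u hu => ?_⟩
  have hquad : c * ‖u - x‖ ^ 2 ≤ ε / 2 * ‖u - x‖ := by
    have hlt : ‖u - x‖ < ε / (2 * c) := hu.trans_le (min_le_right _ _)
    rw [lt_div_iff₀ (by positivity)] at hlt
    nlinarith [norm_nonneg (u - x)]
  have := H u (hu.trans_le (min_le_left _ _))
  simp only [hx, sub_zero]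
  linarith [hh u]

theorem ConvexOn.fsubdiff_subset_subdiff (hf : ConvexOn ℝ univ f) :
    fsubdiff f x ⊆ subdiff f x := by
  intro d hd y
  set v := y - x
  suffices key : ∀ ε > 0, ⟪d, v⟫ - ε * ‖v‖ ≤ f y - f x by
    refine le_of_forall_pos_le_add fun ε hε => ?_
    have hε' : 0 < ε / (‖v‖ + 1) := by positivity
    have hle : ε / (‖v‖ + 1) * ‖v‖ ≤ ε := by
      rw [div_mul_eq_mul_div, div_le_iff₀ (by positivity)]
      nlinarith [norm_nonneg v]
    linarith [key _ hε']
  intro ε hε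
  obtain ⟨δ, hδ, H⟩ := hd ε hε
  obtain ⟨t, ht0, htδ⟩ : ∃ t, 0 < t ∧ ‖v‖ * t < δ := exists_pos_mul_lt hδ _
  set s := min t 1
  have hs0 : 0 < s := lt_min ht0 one_pos
  have hsv : ‖s • v‖ = s * ‖v‖ := by rw [norm_smul, Real.norm_of_nonneg hs0.le]
  have hfrechet := H (x + s • v) <| by
    rw [add_sub_cancel_left, hsv]
    nlinarith [min_le_left t 1, norm_nonneg v]
  have hconv : f (x + s • v) ≤ (1 - s) * f x + s * f y := by
    have hseg : x + s • v = (1 - s) • x + s • y := by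
      simp only [v, smul_sub, sub_smul, one_smul]
      abel
    simpa only [hseg, smul_eq_mul] using hf.2 (mem_univ x) (mem_univ y)
      (by linarith [min_le_right t 1]) hs0.le (sub_add_cancel 1 s)
  -- the Fréchet lower bound and the chord upper bound at `x + s • v` differ from `key` by a factor `s`
  rw [add_sub_cancel_left, hsv, real_inner_smul_right] at hfrechet
  nlinarith

end

theorem stmt3_general {n : ℕ} (f : E n → ℝ) (hconv : ConvexOn ℝ Set.univ f)
    (hsp : SparsityPromoting f)
    (α : ℝ) (hα : 0 < α) :
    (∀ x, 0 ≤ f x - env α f x) ∧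
    (f 0 - env α f 0 = 0) ∧
    (∀ x, f 0 - env α f 0 ≤ f x - env α f x) ∧
    fsubdiff (fun x => f x - env α f x) 0 = subdiff f 0 ∧
    (∃ d ∈ fsubdiff (fun x => f x - env α f x) 0, d ≠ 0) := by
  obtain ⟨hf0, hfmin, d, hd, hd0⟩ := hsp
  have hfnn (x : E n) : 0 ≤ f x := hf0 ▸ hfmin x
  have hbdd : BddBelow (range f) := ⟨0, forall_mem_range.2 hfnn⟩
  have henv_le_self (x : E n) : env α f x ≤ f x := by
    simpa using env_le hbdd hα.le x x
  have henv_le_sq (x : E n) : env α f x ≤ 1 / (2 * α) * ‖x - 0‖ ^ 2 := by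
    simpa [hf0, div_eq_inv_mul] using env_le hbdd hα.le x 0
  have henv0 : env α f 0 = 0 :=
    le_antisymm (hf0 ▸ henv_le_self 0) (le_env hfnn hα.le 0)
  have hnonneg (x : E n) : 0 ≤ f x - env α f x := sub_nonneg.2 (henv_le_self x)
  have hzero : f 0 - env α f 0 = 0 := by rw [hf0, henv0, sub_zero]
  have hsub : fsubdiff (fun x => f x - env α f x) 0 = subdiff f 0 :=
    Subset.antisymm
      ((fsubdiff_subset_of_le (fun x => sub_le_self _ (le_env hfnn hα.le x))
        (by rw [henv0, sub_zero])).trans hconv.fsubdiff_subset_subdiff)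
      (subdiff_subset_fsubdiff.trans
        (fsubdiff_subset_fsubdiff_sub (by positivity) henv0 henv_le_sq))
  exact ⟨hnonneg, hzero, fun x => hzero ▸ hnonneg x, hsub, d, hsub ▸ hd, hd0⟩

theorem stmt3 {n : ℕ} (f : E n → ℝ) (hconv : ConvexOn ℝ Set.univ f)
    (hlsc : LowerSemicontinuous f) (hsp : SparsityPromoting f)
    (α : ℝ) (hα : 0 < α) :
    (∀ x, 0 ≤ f x - env α f x) ∧
    (f 0 - env α f 0 = 0) ∧
    (∀ x, f 0 - env α f 0 ≤ f x - env α f x) ∧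
    fsubdiff (fun x => f x - env α f x) 0 = subdiff f 0 ∧
    (∃ d ∈ fsubdiff (fun x => f x - env α f x) 0, d ≠ 0) :=
  stmt3_general f hconv hsp α hα
end
end

section
/- For any f ∈ Γ₀(ℝ^n) and α > 0, the function f_α = f − env_{αf} is (1/α)-semiconvex; that is, f_α + (1/(2α))‖·‖² is convex. -/
open Set
open scoped RealInnerProductSpace Pointwise

noncomputable section

/-! Expanding the square, `env α f x - ‖x‖² / (2α)` is the infimum over `u` of the affine
functions `x ↦ f u + (‖u - x‖² - ‖x‖²) / (2α)`, hence concave; the infimum is finite because the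
closed convex function `f` has a continuous affine minorant (Hahn–Banach), against which the
quadratic term wins. Subtracting a concave function from the convex `f` leaves a convex one. -/

theorem ConvexOn.exists_affine_minorant {V : Type*} [AddCommGroup V] [Module ℝ V]
    [TopologicalSpace V] [IsTopologicalAddGroup V] [ContinuousSMul ℝ V] [LocallyConvexSpace ℝ V]
    [Nonempty V] {f : V → ℝ} (hconv : ConvexOn ℝ univ f) (hlsc : LowerSemicontinuous f) :
    ∃ (l : V →L[ℝ] ℝ) (c : ℝ), ∀ z, l z + c ≤ f z := by
  obtain ⟨l, c, hle, -⟩ := hconv.exists_affine_le_of_lt (𝕜 := ℝ) (mem_univ (Classical.arbitrary V))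
    (sub_one_lt _) isClosed_univ (lowerSemicontinuousOn_univ_iff.2 hlsc)
  exact ⟨l, c, fun z => hle ⟨z, mem_univ z⟩⟩

theorem ConcaveOn.ciInf {V ι : Type*} [AddCommMonoid V] [Module ℝ V] [Nonempty ι] {s : Set V}
    {g : ι → V → ℝ} (hg : ∀ i, ConcaveOn ℝ s (g i))
    (hbdd : ∀ x ∈ s, BddBelow (range fun i => g i x)) :
    ConcaveOn ℝ s fun x => ⨅ i, g i x := by
  refine ⟨(hg (Classical.arbitrary ι)).1, fun x hx y hy a b ha hb hab => le_ciInf fun i => ?_⟩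
  dsimp only
  calc a • (⨅ i, g i x) + b • ⨅ i, g i y ≤ a • g i x + b • g i y := by
        gcongr <;> exact ciInf_le (hbdd _ ‹_›) i
    _ ≤ g i (a • x + b • y) := (hg i).2 hx hy ha hb hab

theorem bddBelow_range_add_sq_norm_sub {V : Type*} [NormedAddCommGroup V] [NormedSpace ℝ V]
    {f : V → ℝ} (hconv : ConvexOn ℝ univ f) (hlsc : LowerSemicontinuous f) {α : ℝ} (hα : 0 < α)
    (x : V) : BddBelow (range fun u => f u + ‖u - x‖ ^ 2 / (2 * α)) := by
  obtain ⟨l, c, hl⟩ := hconv.exists_affine_minorant hlsc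
  refine ⟨l x + c - α * ‖l‖ ^ 2 / 2, forall_mem_range.2 fun u => ?_⟩
  have hlu : l x - ‖l‖ * ‖u - x‖ ≤ l u := by
    have hnorm := l.le_opNorm (u - x)
    rw [Real.norm_eq_abs, map_sub] at hnorm
    linarith [neg_abs_le (l u - l x)]
  have hsq : ‖l‖ * ‖u - x‖ ≤ ‖u - x‖ ^ 2 / (2 * α) + α * ‖l‖ ^ 2 / 2 := by
    rw [div_add' _ _ _ (by positivity), le_div_iff₀ (by positivity)]
    nlinarith [sq_nonneg (‖u - x‖ - α * ‖l‖)]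
  linarith [hl u]

theorem concaveOn_sq_norm_sub_sub_sq_norm {V : Type*} [NormedAddCommGroup V]
    [InnerProductSpace ℝ V] (u : V) : ConcaveOn ℝ univ fun x => ‖u - x‖ ^ 2 - ‖x‖ ^ 2 := by
  refine ⟨convex_univ, fun x _ y _ a b _ _ hab => le_of_eq ?_⟩
  simp only [norm_sub_sq_real, inner_add_right, real_inner_smul_right, smul_eq_mul]
  linear_combination ‖u‖ ^ 2 * hab

section Envelope

variable {n : ℕ} {f : E n → ℝ} {α : ℝ}

theorem env_sub_sq_norm_eq_iInf {x : E n}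
    (hbdd : BddBelow (range fun u => f u + ‖u - x‖ ^ 2 / (2 * α))) :
    env α f x - ‖x‖ ^ 2 / (2 * α) = ⨅ u, (f u + (‖u - x‖ ^ 2 - ‖x‖ ^ 2) / (2 * α)) := by
  have hshift := (OrderIso.addRight (-(‖x‖ ^ 2 / (2 * α)))).map_ciInf hbdd
  simp only [OrderIso.addRight_apply] at hshift
  rw [env, sub_eq_add_neg]
  exact hshift.trans (congrArg _ (funext fun u => by ring))

theorem concaveOn_env_sub_sq_norm (hconv : ConvexOn ℝ univ f) (hlsc : LowerSemicontinuous f)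
    (hα : 0 < α) : ConcaveOn ℝ univ fun x => env α f x - ‖x‖ ^ 2 / (2 * α) := by
  have hbdd := bddBelow_range_add_sq_norm_sub hconv hlsc hα
  refine ConcaveOn.congr ?_ fun x _ => (env_sub_sq_norm_eq_iInf (hbdd x)).symm
  refine ConcaveOn.ciInf (fun u => ?_) fun x _ => ?_
  · refine (((concaveOn_sq_norm_sub_sub_sq_norm u).smul (c := (2 * α)⁻¹) (by positivity)).add_const
      (f u)).congr fun x _ => ?_
    simp only [Pi.add_apply, smul_eq_mul]
    ring
  · obtain ⟨m, hm⟩ := hbdd x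
    refine ⟨m - ‖x‖ ^ 2 / (2 * α), forall_mem_range.2 fun u => ?_⟩
    have hmu := hm ⟨u, rfl⟩
    rw [sub_div]
    linarith

end Envelope

theorem stmt5 {n : ℕ} (f : E n → ℝ) (hconv : ConvexOn ℝ Set.univ f)
    (hlsc : LowerSemicontinuous f) (α : ℝ) (hα : 0 < α) :
    ConvexOn ℝ Set.univ (fun x => (f x - env α f x) + ‖x‖ ^ 2 / (2 * α)) :=
  (hconv.sub (concaveOn_env_sub_sq_norm hconv hlsc hα)).congr fun x _ => by
    simp only [Pi.sub_apply]
    ring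

end
end

section
/- Let f ∈ Γ₀(ℝ^n) be μ-strongly convex and α > 0. Then f_α = f − env_{αf} is (μ − 1/α)-strongly convex if μ > 1/α, convex if μ = 1/α, and (1/α − μ)-semiconvex if μ < 1/α. -/
open Set
open scoped RealInnerProductSpace Pointwise

noncomputable section

/-- A finite convex function on `ℝⁿ` has an affine-type lower bound. -/
lemma convexOn_lower_bound {n : ℕ} (h : E n → ℝ) (hc : ConvexOn ℝ Set.univ h) :
    ∃ C : ℝ, 0 ≤ C ∧ ∀ u : E n, -(C * (1 + ‖u‖)) ≤ h u := by
  have hcont : Continuous h := hc.locallyLipschitz.continuous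
  obtain ⟨M, hM⟩ : ∃ M, ∀ v ∈ Metric.closedBall (0 : E n) 1, h v ≤ M := by
    obtain ⟨v0, -, hv0⟩ := (isCompact_closedBall (0 : E n) 1).exists_isMaxOn
      ⟨0, by simp⟩ hcont.continuousOn
    exact ⟨h v0, fun v hv => hv0 hv⟩
  refine ⟨|M| + 3 * |h 0| + 1, by positivity, fun u => ?_⟩
  have hball : ∀ v : E n, ‖v‖ ≤ 1 → 2 * h 0 - M ≤ h v := by
    intro v hv
    have h1 : h 0 ≤ (1/2 : ℝ) * h v + (1/2 : ℝ) * h (-v) := by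
      have := hc.2 (Set.mem_univ v) (Set.mem_univ (-v))
        (by norm_num : (0:ℝ) ≤ 1/2) (by norm_num : (0:ℝ) ≤ 1/2) (by norm_num)
      simpa using this
    have h2 : h (-v) ≤ M := hM _ (by simpa using hv)
    linarith
  have habs1 : -|h 0| ≤ h 0 := neg_abs_le _
  have habs2 : h 0 ≤ |h 0| := le_abs_self _
  have habs3 : M ≤ |M| := le_abs_self _
  by_cases hu : ‖u‖ ≤ 1
  · have := hball u hu
    nlinarith [norm_nonneg u, mul_nonneg (norm_nonneg u) (abs_nonneg M),
      mul_nonneg (norm_nonneg u) (abs_nonneg (h 0))]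
  · push_neg at hu
    have hu0 : (0:ℝ) < ‖u‖ := by linarith
    have k1 : h ((1/‖u‖) • u) ≤ (1/‖u‖) * h u + (1 - 1/‖u‖) * h 0 := by
      have := hc.2 (Set.mem_univ u) (Set.mem_univ (0 : E n))
        (by positivity : (0:ℝ) ≤ 1/‖u‖)
        (by rw [sub_nonneg, div_le_one hu0]; linarith : (0:ℝ) ≤ 1 - 1/‖u‖)
        (by ring)
      simpa using this
    have k2 : 2 * h 0 - M ≤ h ((1/‖u‖) • u) := by
      apply hball
      rw [norm_smul, Real.norm_eq_abs, abs_of_pos (by positivity : (0:ℝ) < 1/‖u‖),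
        one_div, inv_mul_cancel₀ hu0.ne']
    have k3 : 2 * h 0 - M ≤ (1/‖u‖) * h u + (1 - 1/‖u‖) * h 0 := le_trans k2 k1
    have k4 := mul_le_mul_of_nonneg_left k3 hu0.le
    have e : ‖u‖ * ((1/‖u‖) * h u + (1 - 1/‖u‖) * h 0) = h u + (‖u‖ - 1) * h 0 := by
      field_simp
    rw [e] at k4
    nlinarith [mul_le_mul_of_nonneg_left habs3 hu0.le,
      mul_le_mul_of_nonneg_left habs1 hu0.le,
      mul_le_mul_of_nonneg_left habs2 hu0.le,
      mul_nonneg (norm_nonneg u) (abs_nonneg (h 0)),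
      mul_nonneg (norm_nonneg u) (abs_nonneg M), abs_nonneg M, abs_nonneg (h 0)]

lemma env_bddBelow {n : ℕ} (f : E n → ℝ) (μ C α : ℝ) (hμ : 0 < μ) (hα : 0 < α)
    (hC : 0 ≤ C) (hlb : ∀ u : E n, -(C * (1 + ‖u‖)) ≤ f u - μ / 2 * ‖u‖ ^ 2)
    (x : E n) :
    BddBelow (Set.range fun u => f u + ‖u - x‖ ^ 2 / (2 * α)) := by
  refine ⟨-C - C ^ 2 / (2 * μ), ?_⟩
  rintro v ⟨u, rfl⟩
  have h1 := hlb u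
  have h2 : (0:ℝ) ≤ ‖u - x‖ ^ 2 / (2 * α) := by positivity
  have key : (0:ℝ) ≤ μ / 2 * ‖u‖ ^ 2 - C * ‖u‖ + C ^ 2 / (2 * μ) := by
    have e : μ / 2 * ‖u‖ ^ 2 - C * ‖u‖ + C ^ 2 / (2 * μ)
        = (μ * ‖u‖ - C) ^ 2 / (2 * μ) := by
      field_simp
      ring
    rw [e]
    positivity
  linarith

lemma phi_convexOn {n : ℕ} (f : E n → ℝ) (α : ℝ) (hα : 0 < α)
    (hbdd : ∀ x : E n, BddBelow (Set.range fun u => f u + ‖u - x‖ ^ 2 / (2 * α))) :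
    ConvexOn ℝ Set.univ (fun x => ‖x‖ ^ 2 / (2 * α) - env α f x) := by
  have key : ∀ w u : E n, env α f w ≤ f u + ‖u - w‖ ^ 2 / (2 * α) :=
    fun w u => csInf_le (hbdd w) ⟨u, rfl⟩
  refine ⟨convex_univ, fun x _ y _ a b ha hb hab => ?_⟩
  obtain rfl : b = 1 - a := by linarith
  simp only [smul_eq_mul]
  have hz : ‖a • x + (1-a) • y‖ ^ 2 / (2 * α)
      - (a * (‖x‖ ^ 2 / (2 * α) - env α f x)
        + (1-a) * (‖y‖ ^ 2 / (2 * α) - env α f y))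
      ≤ env α f (a • x + (1-a) • y) := by
    apply le_csInf (Set.range_nonempty _)
    rintro v ⟨u, rfl⟩
    have h1 := key x u
    have h2 := key y u
    have e1 : ‖u - x‖ ^ 2 = ‖u‖ ^ 2 - 2 * ⟪u, x⟫ + ‖x‖ ^ 2 := norm_sub_sq_real u x
    have e2 : ‖u - y‖ ^ 2 = ‖u‖ ^ 2 - 2 * ⟪u, y⟫ + ‖y‖ ^ 2 := norm_sub_sq_real u y
    have ez : ‖u - (a • x + (1-a) • y)‖ ^ 2
        = ‖u‖ ^ 2 - 2 * (a * ⟪u, x⟫ + (1-a) * ⟪u, y⟫) + ‖a • x + (1-a) • y‖ ^ 2 := by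
      rw [norm_sub_sq_real, inner_add_right, real_inner_smul_right, real_inner_smul_right]
    rw [e1] at h1
    rw [e2] at h2
    beta_reduce
    rw [ez]
    have d1 : (0:ℝ) ≤ f u + (‖u‖ ^ 2 - 2 * ⟪u, x⟫ + ‖x‖ ^ 2) / (2 * α) - env α f x := by
      linarith
    have d2 : (0:ℝ) ≤ f u + (‖u‖ ^ 2 - 2 * ⟪u, y⟫ + ‖y‖ ^ 2) / (2 * α) - env α f y := by
      linarith
    have hd1 := mul_nonneg ha d1
    have hd2 := mul_nonneg hb d2
    have hE : f u + (‖u‖ ^ 2 - 2 * (a * ⟪u, x⟫ + (1-a) * ⟪u, y⟫)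
          + ‖a • x + (1-a) • y‖ ^ 2) / (2 * α)
        - (‖a • x + (1-a) • y‖ ^ 2 / (2 * α)
          - (a * (‖x‖ ^ 2 / (2 * α) - env α f x)
            + (1-a) * (‖y‖ ^ 2 / (2 * α) - env α f y)))
        = a * (f u + (‖u‖ ^ 2 - 2 * ⟪u, x⟫ + ‖x‖ ^ 2) / (2 * α) - env α f x)
          + (1-a) * (f u + (‖u‖ ^ 2 - 2 * ⟪u, y⟫ + ‖y‖ ^ 2) / (2 * α) - env α f y) := by
      field_simp
      ring
    linarith [hd1, hd2, hE]
  linarith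

theorem stmt6 {n : ℕ} (f : E n → ℝ) (hlsc : LowerSemicontinuous f)
    (μ : ℝ) (hμ : 0 < μ)
    (hsc : ConvexOn ℝ Set.univ (fun x => f x - μ / 2 * ‖x‖ ^ 2))
    (α : ℝ) (hα : 0 < α) :
    (μ > 1 / α → ConvexOn ℝ Set.univ
        (fun x => (f x - env α f x) - (μ - 1 / α) / 2 * ‖x‖ ^ 2)) ∧
    (μ = 1 / α → ConvexOn ℝ Set.univ (fun x => f x - env α f x)) ∧
    (μ < 1 / α → ConvexOn ℝ Set.univ
        (fun x => (f x - env α f x) + (1 / α - μ) / 2 * ‖x‖ ^ 2)) := by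
  obtain ⟨C, hC0, hlb⟩ := convexOn_lower_bound _ hsc
  have hbdd := env_bddBelow f μ C α hμ hα hC0 hlb
  have hmain : ConvexOn ℝ Set.univ
      (fun x : E n => (f x - μ / 2 * ‖x‖ ^ 2) + (‖x‖ ^ 2 / (2 * α) - env α f x)) :=
    hsc.add (phi_convexOn f α hα hbdd)
  refine ⟨fun _ => ?_, fun hmuα => ?_, fun _ => ?_⟩
  · have : (fun x : E n => (f x - env α f x) - (μ - 1 / α) / 2 * ‖x‖ ^ 2)
        = fun x : E n => (f x - μ / 2 * ‖x‖ ^ 2) + (‖x‖ ^ 2 / (2 * α) - env α f x) := by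
      funext x
      have hα' : α ≠ 0 := hα.ne'
      field_simp
      ring
    rw [this]; exact hmain
  · have : (fun x : E n => f x - env α f x)
        = fun x : E n => (f x - μ / 2 * ‖x‖ ^ 2) + (‖x‖ ^ 2 / (2 * α) - env α f x) := by
      funext x
      have hα' : α ≠ 0 := hα.ne'
      rw [hmuα]
      field_simp
      ring
    rw [this]; exact hmain
  · have : (fun x : E n => (f x - env α f x) + (1 / α - μ) / 2 * ‖x‖ ^ 2)
        = fun x : E n => (f x - μ / 2 * ‖x‖ ^ 2) + (‖x‖ ^ 2 / (2 * α) - env α f x) := by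
      funext x
      have hα' : α ≠ 0 := hα.ne'
      field_simp
      ring
    rw [this]; exact hmain
end
end

section
/- Let f ∈ Γ₀(ℝ^n) be sparsity promoting, α, β > 0, and f_α = f − env_{αf}. If x ∈ min{α, β}·∂f(0), then 0 ∈ prox_{βf_α}(x), i.e., 0 minimizes u ↦ f_α(u) + (1/(2β))‖u−x‖². -/
open Set
open scoped RealInnerProductSpace Pointwise

noncomputable section

theorem stmt8 {n : ℕ} (f : E n → ℝ) (hconv : ConvexOn ℝ Set.univ f)
    (hlsc : LowerSemicontinuous f) (hsp : SparsityPromoting f)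
    (α β : ℝ) (hα : 0 < α) (hβ : 0 < β) (x : E n)
    (hx : x ∈ (min α β) • subdiff f 0) :
    (0 : E n) ∈ proxSet β (fun u => f u - env α f u) x := by
  obtain ⟨h0, hmin, -⟩ := hsp
  obtain ⟨d, hd, hxd⟩ := hx
  have hge : ∀ y, 0 ≤ f y := fun y => h0 ▸ hmin y
  have hdle : ∀ y : E n, ⟪d, y⟫ ≤ f y := by
    intro y
    have := hd y
    simpa [h0] using this
  have hbdd : ∀ u : E n, BddBelow (Set.range fun v => f v + ‖v - u‖ ^ 2 / (2 * α)) := by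
    intro u
    refine ⟨0, ?_⟩
    rintro _ ⟨v, rfl⟩
    have := hge v
    positivity
  have henv_le : ∀ u v : E n, env α f u ≤ f v + ‖v - u‖ ^ 2 / (2 * α) := fun u v =>
    csInf_le (hbdd u) ⟨v, rfl⟩
  have henv_nonneg : ∀ u : E n, 0 ≤ env α f u := by
    intro u
    refine le_csInf ⟨_, ⟨0, rfl⟩⟩ ?_
    rintro _ ⟨v, rfl⟩
    have := hge v
    positivity
  have henv0 : env α f 0 = 0 := le_antisymm (by simpa [h0] using henv_le 0 0) (henv_nonneg 0)
  intro u
  simp only [h0, henv0, zero_sub, norm_neg, sub_zero, zero_sub, sub_self, zero_add]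
  have h2β : (0:ℝ) < 2 * β := by linarith
  have h1 : env α f u * (2 * α) ≤ ‖u‖ ^ 2 := by
    have := henv_le u 0
    rw [h0, zero_add, zero_sub, norm_neg] at this
    exact (le_div_iff₀ (by positivity)).mp this
  have h2 : env α f u ≤ f u := by simpa using henv_le u u
  have h3 : ⟪d, u⟫ ≤ f u := hdle u
  have hxu : ⟪x, u⟫ = min α β * ⟪d, u⟫ := by rw [← hxd, real_inner_smul_left]
  have hexp : ‖u - x‖ ^ 2 = ‖u‖ ^ 2 - 2 * ⟪x, u⟫ + ‖x‖ ^ 2 := by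
    rw [norm_sub_sq_real, real_inner_comm]
  have key : ‖x‖ ^ 2 ≤ (f u - env α f u) * (2 * β) + ‖u - x‖ ^ 2 := by
    rw [hexp, hxu]
    rcases le_total β α with hba | hab
    · rw [min_eq_right hba]
      nlinarith [mul_nonneg (henv_nonneg u) (sub_nonneg.mpr hba), h1, h3, hβ]
    · rw [min_eq_left hab]
      rcases le_total (‖u‖ ^ 2) (2 * α * ⟪d, u⟫) with ht | ht
      · nlinarith [mul_nonneg (sub_nonneg.mpr hab) (sub_nonneg.mpr ht), h1, h3, hα, hβ,
          mul_le_mul_of_nonneg_left h3 (le_of_lt (mul_pos hα hβ)),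
          mul_le_mul_of_nonneg_left h1 hβ.le]
      · nlinarith [mul_nonneg (sub_nonneg.mpr h2) h2β.le, hα, hβ]
  calc ‖x‖ ^ 2 / (2 * β) ≤ ((f u - env α f u) * (2 * β) + ‖u - x‖ ^ 2) / (2 * β) := by
        gcongr
    _ = f u - env α f u + ‖u - x‖ ^ 2 / (2 * β) := by field_simp
end
end

section
/- Let f ∈ Γ₀(ℝ^n) be sparsity promoting and w ∈ dom(∂f). If w ∈ ∂f(0) and there exists a nonzero ξ in the relative interior of ∂f(0) with ξ ∈ ∂f(w), then w = 0. -/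
open Set
open scoped RealInnerProductSpace Pointwise

noncomputable section

lemma extend_ri {n : ℕ} {S : Set (E n)} {ξ p : E n}
    (hξ : ξ ∈ intrinsicInterior ℝ S) (hp : p ∈ S) :
    ∃ t > (0:ℝ), ξ + t • (ξ - p) ∈ S := by
  obtain ⟨y, hy, hyx⟩ := hξ
  have hpA : p ∈ affineSpan ℝ S := subset_affineSpan ℝ S hp
  have hξA : ξ ∈ affineSpan ℝ S := hyx ▸ y.2
  have hmem : ∀ t : ℝ, ξ + t • (ξ - p) ∈ affineSpan ℝ S := by
    intro t
    have := (affineSpan ℝ S).smul_vsub_vadd_mem t hξA hpA hξA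
    simpa [vsub_eq_sub, vadd_eq_add, add_comm] using this
  let c : ℝ → affineSpan ℝ S := fun t => ⟨ξ + t • (ξ - p), hmem t⟩
  have hc : Continuous c := by
    apply Continuous.subtype_mk
    continuity
  have hc0 : c 0 = y := by
    apply Subtype.ext
    simp [c, hyx]
  have hU : interior ((↑) ⁻¹' S : Set (affineSpan ℝ S)) ∈ nhds (c 0) := by
    rw [hc0]; exact (isOpen_interior).mem_nhds hy
  have hpre : c ⁻¹' (interior ((↑) ⁻¹' S : Set (affineSpan ℝ S))) ∈ nhds (0:ℝ) :=
    hc.continuousAt.preimage_mem_nhds hU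
  obtain ⟨ε, hε, hball⟩ := Metric.mem_nhds_iff.1 hpre
  refine ⟨ε/2, by linarith, ?_⟩
  have h2 : c (ε/2) ∈ interior ((↑) ⁻¹' S : Set (affineSpan ℝ S)) := by
    apply hball
    simp only [Metric.mem_ball, Real.dist_eq, sub_zero, abs_of_nonneg (le_of_lt (half_pos hε))]
    linarith
  simpa [c] using interior_subset h2

theorem stmt9 {n : ℕ} (f : E n → ℝ) (hconv : ConvexOn ℝ Set.univ f)
    (hlsc : LowerSemicontinuous f) (hsp : SparsityPromoting f)
    (w ξ : E n) (hw : w ∈ subdiff f 0) (hξ0 : ξ ≠ 0)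
    (hξri : ξ ∈ intrinsicInterior ℝ (subdiff f 0)) (hξw : ξ ∈ subdiff f w) :
    w = 0 := by
  obtain ⟨hf0, hmin, -⟩ := hsp
  have h0S : (0:E n) ∈ subdiff f 0 := by
    intro y; simpa [hf0] using hmin y
  have hub : ∀ η ∈ subdiff f 0, ⟪η, w⟫ ≤ f w := by
    intro η hη
    simpa [hf0] using hη w
  have hlb : f w ≤ ⟪ξ, w⟫ := by
    have h := hξw 0
    rw [hf0] at h
    have h' : f w - ⟪ξ, w⟫ ≤ 0 := by
      simpa [zero_sub, inner_neg_right, sub_eq_add_neg] using h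
    linarith
  have key : ∀ p ∈ subdiff f 0, f w ≤ ⟪p, w⟫ := by
    intro p hp
    obtain ⟨t, ht, hmem⟩ := extend_ri hξri hp
    have h := hub _ hmem
    have hin : ⟪ξ, w⟫ + t * (⟪ξ, w⟫ - ⟪p, w⟫) ≤ f w := by
      rw [inner_add_left, real_inner_smul_left, inner_sub_left] at h
      exact h
    nlinarith
  have hfw0 : f w = 0 := by
    have h1 : f w ≤ 0 := by simpa using key 0 h0S
    have h2 : (0:ℝ) ≤ f w := hf0 ▸ hmin w
    linarith
  have hww : ⟪w, w⟫ ≤ 0 := hfw0 ▸ hub w hw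
  have : ⟪w, w⟫ = 0 := le_antisymm hww real_inner_self_nonneg
  exact inner_self_eq_zero.mp this
end
end

section
/- Let f ∈ Γ₀(ℝ^n) be sparsity promoting, 0 < β < α, and f_α = f − env_{αf}. Then for every x ∈ β∂f(0), the function u ↦ f_α(u) + (1/(2β))‖u−x‖² has 0 as its unique minimizer; i.e., prox_{βf_α}(x) = {0}. -/
open Set
open scoped RealInnerProductSpace Pointwise

noncomputable section

theorem stmt10 {n : ℕ} (f : E n → ℝ) (hconv : ConvexOn ℝ Set.univ f)
    (hlsc : LowerSemicontinuous f) (hsp : SparsityPromoting f)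
    (α β : ℝ) (hβ : 0 < β) (hβα : β < α) (x : E n)
    (hx : x ∈ β • subdiff f 0) :
    proxSet β (fun u => f u - env α f u) x = {0} := by
  obtain ⟨hf0, hfmin, -⟩ := hsp
  have hfnn : ∀ v, 0 ≤ f v := fun v => hf0 ▸ hfmin v
  obtain ⟨d, hd, rfl⟩ := hx
  have hα : 0 < α := hβ.trans hβα
  have hbdd : ∀ u : E n, ∀ z ∈ Set.range (fun v => f v + ‖v - u‖ ^ 2 / (2 * α)),
      (0:ℝ) ≤ z := by
    rintro u z ⟨v, rfl⟩
    exact add_nonneg (hfnn v) (by positivity)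
  have henv_le : ∀ u : E n, env α f u ≤ ‖u‖ ^ 2 / (2 * α) := by
    intro u
    have h := csInf_le ⟨0, fun z hz => hbdd u z hz⟩
      (Set.mem_range_self (f := fun v => f v + ‖v - u‖ ^ 2 / (2 * α)) 0)
    simpa [env, hf0, zero_sub, norm_neg] using h
  have henv0 : 0 ≤ env α f 0 := le_csInf (Set.range_nonempty _) (hbdd 0)
  have hinner : ∀ u : E n, ⟪d, u⟫ ≤ f u := by
    intro u
    have h := hd u
    simpa [hf0, sub_zero] using h
  have hexp : ∀ u : E n, ‖u - β • d‖ ^ 2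
      = ‖u‖ ^ 2 - 2 * (β * ⟪d, u⟫) + ‖β • d‖ ^ 2 := by
    intro u
    rw [@norm_sub_sq_real, real_inner_smul_right, real_inner_comm]
  have key : ∀ u : E n, ‖β • d‖ ^ 2 / (2 * β) + (‖u‖ ^ 2 / (2 * β) - ‖u‖ ^ 2 / (2 * α))
      ≤ f u - env α f u + ‖u - β • d‖ ^ 2 / (2 * β) := by
    intro u
    have h1 : ‖u - β • d‖ ^ 2 / (2 * β)
        = ‖u‖ ^ 2 / (2 * β) - ⟪d, u⟫ + ‖β • d‖ ^ 2 / (2 * β) := by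
      rw [hexp u]; field_simp
    have h2 := henv_le u
    have h3 := hinner u
    rw [h1]; linarith
  have hgap : ∀ u : E n, ‖u‖ ^ 2 / (2 * α) ≤ ‖u‖ ^ 2 / (2 * β) := by
    intro u
    gcongr
    all_goals linarith
  ext p
  simp only [proxSet, Set.mem_setOf_eq, Set.mem_singleton_iff]
  constructor
  · intro hp
    have h0 := hp 0
    have hk := key p
    have h00 : ‖(0:E n) - β • d‖ = ‖β • d‖ := by rw [zero_sub, norm_neg]
    rw [h00, hf0] at h0
    have hpsq : ‖p‖ ^ 2 / (2 * β) - ‖p‖ ^ 2 / (2 * α) ≤ 0 := by linarith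
    have hnn : 0 ≤ ‖p‖ ^ 2 := by positivity
    have : ‖p‖ ^ 2 = 0 := by
      by_contra h
      have hpos : 0 < ‖p‖ ^ 2 := lt_of_le_of_ne hnn (Ne.symm h)
      have : ‖p‖ ^ 2 / (2 * α) < ‖p‖ ^ 2 / (2 * β) := by
        apply div_lt_div_of_pos_left hpos (by linarith) (by linarith)
      linarith
    have : ‖p‖ = 0 := by
      have := pow_eq_zero_iff (n := 2) (by norm_num) |>.mp this
      exact this
    exact norm_eq_zero.mp this
  · rintro rfl u
    have hk := key u
    have hg := hgap u
    have h00 : ‖(0:E n) - β • d‖ = ‖β • d‖ := by rw [zero_sub, norm_neg]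
    rw [h00, hf0]
    linarith
end
end

section
/- Let f ∈ Γ₀(ℝ^n) be sparsity promoting, 0 < α < β, and f_α = f − env_{αf}. Then for every x ∈ α∂f(0), prox_{βf_α}(x) = {0}. -/
open Set
open scoped RealInnerProductSpace Pointwise

noncomputable section

theorem stmt12 {n : ℕ} (f : E n → ℝ) (hconv : ConvexOn ℝ Set.univ f)
    (hlsc : LowerSemicontinuous f) (hsp : SparsityPromoting f)
    (α β : ℝ) (hα : 0 < α) (hαβ : α < β) (x : E n)
    (hx : x ∈ α • subdiff f 0) :
    proxSet β (fun u => f u - env α f u) x = {0} := by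
  obtain ⟨hf0, hfmin, -⟩ := hsp
  obtain ⟨d, hd, rfl⟩ := hx
  have hβ : 0 < β := hα.trans hαβ
  have hfnn : ∀ y, 0 ≤ f y := fun y => hf0 ▸ hfmin y
  have hfd : ∀ y, ⟪d, y⟫ ≤ f y := by
    intro y
    have := hd y
    simpa [hf0] using this
  -- upper bound on the envelope
  have hbdd : ∀ u : E n, BddBelow (Set.range fun w => f w + ‖w - u‖ ^ 2 / (2 * α)) := by
    intro u
    refine ⟨0, ?_⟩
    rintro _ ⟨w, rfl⟩
    have := hfnn w
    positivity
  have henv_le : ∀ u w : E n, env α f u ≤ f w + ‖w - u‖ ^ 2 / (2 * α) := by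
    intro u w
    exact csInf_le (hbdd u) ⟨w, rfl⟩
  -- env at 0
  have henv0 : env α f 0 = 0 := by
    refine le_antisymm ?_ ?_
    · have := henv_le 0 0
      simpa [hf0] using this
    · refine le_csInf ⟨_, ⟨0, rfl⟩⟩ ?_
      rintro _ ⟨w, rfl⟩
      have := hfnn w
      positivity
  -- key inequality
  have key : ∀ u : E n,
      ‖α • d - (0:E n)‖ ^ 2 / (2 * β) + (β - α) / (2 * β ^ 2) * ‖u‖ ^ 2 ≤
        (f u - env α f u) + ‖u - α • d‖ ^ 2 / (2 * β) := by
    intro u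
    set t : ℝ := α / β with ht
    have ht0 : 0 < t := div_pos hα hβ
    have ht1 : t < 1 := (div_lt_one hβ).2 hαβ
    -- envelope upper bound at (1-t)•u
    have h1 : env α f u ≤ f ((1 - t) • u) + t ^ 2 * ‖u‖ ^ 2 / (2 * α) := by
      have := henv_le u ((1 - t) • u)
      have hnorm : ‖(1 - t) • u - u‖ ^ 2 = t ^ 2 * ‖u‖ ^ 2 := by
        have : (1 - t) • u - u = (-t) • u := by
          rw [sub_smul, one_smul, neg_smul]; abel
        rw [this, norm_smul]
        simp [abs_of_pos ht0, mul_pow]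
      rw [hnorm] at this
      linarith
    -- convexity
    have h2 : f ((1 - t) • u) ≤ (1 - t) * f u := by
      have := hconv.2 (Set.mem_univ u) (Set.mem_univ (0 : E n))
        (by linarith : (0:ℝ) ≤ 1 - t) (le_of_lt ht0) (by ring)
      simpa [hf0] using this
    have h3 : t * ⟪d, u⟫ ≤ t * f u := by
      exact mul_le_mul_of_nonneg_left (hfd u) (le_of_lt ht0)
    -- expand norms
    have e1 : ‖u - α • d‖ ^ 2 = ‖u‖ ^ 2 - 2 * (α * ⟪d, u⟫) + α ^ 2 * ‖d‖ ^ 2 := by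
      rw [norm_sub_sq_real, real_inner_smul_right, norm_smul, real_inner_comm]
      simp [abs_of_pos hα, mul_pow]
    have e2 : ‖α • d - (0:E n)‖ ^ 2 = α ^ 2 * ‖d‖ ^ 2 := by
      rw [sub_zero, norm_smul]
      simp [abs_of_pos hα, mul_pow]
    rw [e1, e2]
    have hβ' : β ≠ 0 := ne_of_gt hβ
    have hα' : α ≠ 0 := ne_of_gt hα
    have htα : t ^ 2 * ‖u‖ ^ 2 / (2 * α) = α / (2 * β ^ 2) * ‖u‖ ^ 2 := by
      rw [ht]; field_simp
    have htβ : t * ⟪d, u⟫ = α / β * ⟪d, u⟫ := by rw [ht]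
    have h4 : f u - env α f u ≥ α / β * ⟪d, u⟫ - α / (2 * β ^ 2) * ‖u‖ ^ 2 := by
      rw [htα] at h1
      rw [htβ] at h3
      linarith
    have expand : α ^ 2 * ‖d‖ ^ 2 / (2 * β) + (β - α) / (2 * β ^ 2) * ‖u‖ ^ 2 =
        (α / β * ⟪d, u⟫ - α / (2 * β ^ 2) * ‖u‖ ^ 2) +
          (‖u‖ ^ 2 - 2 * (α * ⟪d, u⟫) + α ^ 2 * ‖d‖ ^ 2) / (2 * β) := by
      field_simp
      ring
    rw [expand]
    linarith
  have hc : 0 < (β - α) / (2 * β ^ 2) := div_pos (by linarith) (by positivity)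
  ext p
  simp only [proxSet, Set.mem_setOf_eq, Set.mem_singleton_iff]
  constructor
  · intro hp
    have h1 := hp 0
    have h2 := key p
    rw [hf0, henv0] at h1
    have : (β - α) / (2 * β ^ 2) * ‖p‖ ^ 2 ≤ 0 := by
      simp only [zero_sub, norm_neg] at h1
      have h1' : (f p - env α f p) + ‖p - α • d‖ ^ 2 / (2 * β) ≤ ‖α • d - (0:E n)‖ ^ 2 / (2 * β) := by
        have : ‖α • d - (0:E n)‖ = ‖α • d‖ := by rw [sub_zero]
        rw [this]
        simpa using h1
      linarith
    have hnp : ‖p‖ ^ 2 ≤ 0 := by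
      by_contra h
      push_neg at h
      nlinarith
    have : ‖p‖ = 0 := by nlinarith [norm_nonneg p, sq_nonneg ‖p‖]
    exact norm_eq_zero.mp this
  · rintro rfl
    intro u
    have h2 := key u
    have hcu : 0 ≤ (β - α) / (2 * β ^ 2) * ‖u‖ ^ 2 := mul_nonneg hc.le (sq_nonneg _)
    rw [hf0, henv0]
    simp only [zero_sub, norm_neg, sub_zero] at h2 ⊢
    linarith
end
end

section
/- Let C ⊆ ℝ^n be nonempty closed convex and α > 0. Then ι_C − env_{α ι_C} = ι_C; i.e., env_{α ι_C}(x) = 0 for all x ∈ C. Conversely, if f ∈ Γ₀(ℝ^n) is nonnegative with f(0)=0 and f = f − env_{αf} on dom(f), then f is the indicator function of its domain (f(x) = 0 for all x ∈ dom f). -/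
open Set
open scoped RealInnerProductSpace Pointwise

noncomputable section

theorem stmt14 {n : ℕ} (α : ℝ) (hα : 0 < α) :
    (∀ C : Set (E n), C.Nonempty → IsClosed C → Convex ℝ C →
      ∀ x ∈ C, sInf ((fun u => ‖u - x‖ ^ 2 / (2 * α)) '' C) = 0) ∧
    (∀ (f : E n → ℝ) (s : Set (E n)), s.Nonempty → Convex ℝ s →
      ConvexOn ℝ s f → LowerSemicontinuousOn f s →
      (∀ x ∈ s, 0 ≤ f x) → (0 : E n) ∈ s → f 0 = 0 →
      (∀ x ∈ s, sInf ((fun u => f u + ‖u - x‖ ^ 2 / (2 * α)) '' s) = 0) →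
      ∀ x ∈ s, f x = 0) := by
  constructor
  · intro C hCne hCc hCconv x hx
    apply le_antisymm
    · have h0 : (fun u => ‖u - x‖ ^ 2 / (2 * α)) x = 0 := by simp
      calc sInf ((fun u => ‖u - x‖ ^ 2 / (2 * α)) '' C)
          ≤ (fun u => ‖u - x‖ ^ 2 / (2 * α)) x := by
            apply csInf_le
            · exact ⟨0, fun y ⟨u, _, hu⟩ => hu ▸ by positivity⟩
            · exact ⟨x, hx, rfl⟩
        _ = 0 := h0
    · apply le_csInf (hCne.image _)
      rintro y ⟨u, _, rfl⟩
      positivity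
  · intro f s hsne hsconv hfconv hlsc hfnonneg h0s hf0 henv x hx
    by_contra hne
    have hfx : 0 < f x := lt_of_le_of_ne (hfnonneg x hx) (Ne.symm hne)
    have hlt : f x / 2 < f x := by linarith
    have hev := hlsc x hx (f x / 2) hlt
    obtain ⟨δ, hδ, hball⟩ := Metric.mem_nhdsWithin_iff.mp hev
    set m := min (f x / 2) (δ ^ 2 / (2 * α)) with hm
    have hmpos : 0 < m := lt_min (by linarith) (by positivity)
    have hlow : m ≤ sInf ((fun u => f u + ‖u - x‖ ^ 2 / (2 * α)) '' s) := by
      apply le_csInf (hsne.image _)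
      rintro y ⟨u, hu, rfl⟩
      by_cases hnear : dist u x < δ
      · have := hball ⟨Metric.mem_ball.mpr hnear, hu⟩
        have hnn : (0:ℝ) ≤ ‖u - x‖ ^ 2 / (2 * α) := by positivity
        calc m ≤ f x / 2 := min_le_left _ _
          _ ≤ f u := le_of_lt this
          _ ≤ f u + ‖u - x‖ ^ 2 / (2 * α) := by linarith
      · push_neg at hnear
        have hd : δ ≤ ‖u - x‖ := by rwa [dist_eq_norm] at hnear
        have hsq : δ ^ 2 ≤ ‖u - x‖ ^ 2 :=
          pow_le_pow_left₀ (le_of_lt hδ) hd 2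
        have h2 : δ ^ 2 / (2 * α) ≤ ‖u - x‖ ^ 2 / (2 * α) := by
          apply div_le_div_of_nonneg_right hsq (by positivity)
        have := hfnonneg u hu
        calc m ≤ δ ^ 2 / (2 * α) := min_le_right _ _
          _ ≤ ‖u - x‖ ^ 2 / (2 * α) := h2
          _ ≤ f u + ‖u - x‖ ^ 2 / (2 * α) := by linarith
    rw [henv x hx] at hlow
    linarith
end
end

section
/- Let f : ℝ → ℝ be piecewise quadratic: f(x) = (a₁/2)x² + b₁x for x ≤ 0 and f(x) = (a₂/2)x² + b₂x for x ≥ 0 (with (a₁,b₁) and (a₂,b₂) giving the same value 0 at 0). Then f is sparsity promoting if and only if a₁ ≥ 0, a₂ ≥ 0, b₁ ≤ 0 ≤ b₂, and b₂ − b₁ > 0. -/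
open Set

noncomputable section

/-- Fréchet subdifferential of a function on ℝ. -/
def fsubdiffR (f : ℝ → ℝ) (x : ℝ) : Set ℝ :=
  {d | ∀ ε > (0:ℝ), ∃ δ > (0:ℝ), ∀ u, |u - x| < δ →
    f x + d * (u - x) - ε * |u - x| ≤ f u}

/-- Moreau envelope on ℝ with parameter `α`. -/
def envR (α : ℝ) (f : ℝ → ℝ) (x : ℝ) : ℝ :=
  sInf (Set.range fun u => f u + (u - x) ^ 2 / (2 * α))

/-- Proximity operator on ℝ (as a set of minimizers). -/
def proxSetR (α : ℝ) (f : ℝ → ℝ) (x : ℝ) : Set ℝ :=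
  {p | ∀ u, f p + (p - x) ^ 2 / (2 * α) ≤ f u + (u - x) ^ 2 / (2 * α)}

/-! The proof computes `∂f(0) = [b₁, b₂]` once `a₁, a₂ ≥ 0`: a global linear minorant `d * u ≤ f u`
gives `d ∈ ∂f(0)`, while a quadratic upper bound `f u ≤ b * u + c * u ^ 2` on one side of `0`
bounds every Fréchet subgradient by the one-sided slope `b`. Global minimality at `0` forces
`a₁, a₂ ≥ 0` (a concave branch eventually goes negative) and `0 ∈ ∂f(0)`, i.e. `b₁ ≤ 0 ≤ b₂`;
a nonzero subgradient then makes the interval `[b₁, b₂]` nondegenerate. -/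

section FrechetSubdifferential

variable {f : ℝ → ℝ} {x d : ℝ}

theorem mem_fsubdiffR_of_forall_le (h : ∀ u, f x + d * (u - x) ≤ f u) : d ∈ fsubdiffR f x :=
  fun ε hε => ⟨1, one_pos, fun u _ => by
    have := h u
    have : 0 ≤ ε * |u - x| := by positivity
    linarith⟩

theorem neg_mem_fsubdiffR_comp_neg (hd : d ∈ fsubdiffR f x) :
    -d ∈ fsubdiffR (fun u => f (-u)) (-x) := by
  intro ε hε
  obtain ⟨δ, hδ, H⟩ := hd ε hε
  refine ⟨δ, hδ, fun u hu => ?_⟩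
  have hux : |-u - x| = |u - -x| := by rw [← abs_neg]; ring_nf
  have := H (-u) (hux ▸ hu)
  show f (-(-x)) + -d * (u - -x) - ε * |u - -x| ≤ f (-u)
  rw [neg_neg, ← hux]
  linarith

theorem le_of_mem_fsubdiffR_of_forall_pos_le {b c : ℝ} (hd : d ∈ fsubdiffR f x)
    (h : ∀ t > 0, f (x + t) ≤ f x + b * t + c * t ^ 2) : d ≤ b := by
  by_contra! hbd
  obtain ⟨δ, hδ, H⟩ := hd ((d - b) / 2) (by linarith)
  set t := min (δ / 2) ((d - b) / 2 / (|c| + 1))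
  have ht : 0 < t := lt_min (by linarith) (by have := hbd; positivity)
  have hct : (|c| + 1) * t ≤ (d - b) / 2 :=
    (le_div_iff₀' (by positivity)).1 (min_le_right _ _)
  have hsub := H (x + t) (by
    rw [add_sub_cancel_left, abs_of_pos ht]
    exact (min_le_left _ _).trans_lt (by linarith))
  rw [add_sub_cancel_left, abs_of_pos ht] at hsub
  -- Dividing `(d - b) / 2 * t ≤ c * t ^ 2` by `t` contradicts `(|c| + 1) * t ≤ (d - b) / 2`.
  nlinarith [h t ht, le_abs_self c]

theorem le_of_mem_fsubdiffR_of_forall_pos_le_sub {b c : ℝ} (hd : d ∈ fsubdiffR f x)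
    (h : ∀ t > 0, f (x - t) ≤ f x - b * t + c * t ^ 2) : b ≤ d := by
  have := le_of_mem_fsubdiffR_of_forall_pos_le (b := -b) (c := c)
    (neg_mem_fsubdiffR_comp_neg hd) fun t ht => by
      simpa [neg_add_eq_sub, ← sub_eq_add_neg] using h t ht
  linarith

end FrechetSubdifferential

theorem nonneg_of_forall_pos_mul_sq_add_mul_nonneg {a b : ℝ}
    (h : ∀ x > 0, 0 ≤ a * x ^ 2 + b * x) : 0 ≤ a := by
  by_contra! ha
  have hx : 0 < (|b| + 1) / -a := div_pos (by positivity) (by linarith)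
  have hax : a * ((|b| + 1) / -a) = -(|b| + 1) := by
    rw [div_neg, mul_neg, mul_div_cancel₀ _ ha.ne]
  nlinarith [h _ hx, le_abs_self b]

def piecewiseQuadratic (a₁ b₁ a₂ b₂ : ℝ) (x : ℝ) : ℝ :=
  if x ≤ 0 then a₁ / 2 * x ^ 2 + b₁ * x else a₂ / 2 * x ^ 2 + b₂ * x

namespace piecewiseQuadratic

variable {a₁ b₁ a₂ b₂ : ℝ}

theorem apply_of_nonpos {x : ℝ} (hx : x ≤ 0) :
    piecewiseQuadratic a₁ b₁ a₂ b₂ x = a₁ / 2 * x ^ 2 + b₁ * x := if_pos hx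

theorem apply_of_pos {x : ℝ} (hx : 0 < x) :
    piecewiseQuadratic a₁ b₁ a₂ b₂ x = a₂ / 2 * x ^ 2 + b₂ * x := if_neg hx.not_ge

@[simp]
theorem apply_zero : piecewiseQuadratic a₁ b₁ a₂ b₂ 0 = 0 := by
  simp [apply_of_nonpos le_rfl]

theorem nonneg_coeffs_of_nonneg (h : ∀ x, 0 ≤ piecewiseQuadratic a₁ b₁ a₂ b₂ x) :
    0 ≤ a₁ ∧ 0 ≤ a₂ := by
  constructor
  · have := nonneg_of_forall_pos_mul_sq_add_mul_nonneg (a := a₁ / 2) (b := -b₁) fun x hx => by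
      simpa [apply_of_nonpos (neg_nonpos.2 hx.le)] using h (-x)
    linarith
  · have := nonneg_of_forall_pos_mul_sq_add_mul_nonneg (a := a₂ / 2) (b := b₂) fun x hx => by
      simpa [apply_of_pos hx] using h x
    linarith

theorem mul_le (ha₁ : 0 ≤ a₁) (ha₂ : 0 ≤ a₂) {d : ℝ} (hb₁ : b₁ ≤ d) (hb₂ : d ≤ b₂) (x : ℝ) :
    d * x ≤ piecewiseQuadratic a₁ b₁ a₂ b₂ x := by
  rcases le_or_gt x 0 with hx | hx
  · rw [apply_of_nonpos hx]
    nlinarith [sq_nonneg x]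
  · rw [apply_of_pos hx]
    nlinarith [sq_nonneg x]

theorem fsubdiffR_zero (ha₁ : 0 ≤ a₁) (ha₂ : 0 ≤ a₂) :
    fsubdiffR (piecewiseQuadratic a₁ b₁ a₂ b₂) 0 = Icc b₁ b₂ := by
  ext d
  refine ⟨fun hd => ⟨?_, ?_⟩, fun hd => mem_fsubdiffR_of_forall_le fun u => ?_⟩
  · refine le_of_mem_fsubdiffR_of_forall_pos_le_sub (c := a₁ / 2) hd fun t ht => ?_
    rw [zero_sub, apply_of_nonpos (neg_nonpos.2 ht.le)]
    simp
  · refine le_of_mem_fsubdiffR_of_forall_pos_le (c := a₂ / 2) hd fun t ht => ?_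
    rw [zero_add, apply_of_pos ht]
    simp [add_comm]
  · simpa using mul_le ha₁ ha₂ hd.1 hd.2 u

end piecewiseQuadratic

open piecewiseQuadratic in
theorem stmt15 (a₁ b₁ a₂ b₂ : ℝ) (f : ℝ → ℝ)
    (hf : ∀ x, f x = if x ≤ 0 then a₁ / 2 * x ^ 2 + b₁ * x
                     else a₂ / 2 * x ^ 2 + b₂ * x) :
    (f 0 = 0 ∧ (∀ x, f 0 ≤ f x) ∧ ∃ d ∈ fsubdiffR f 0, d ≠ 0) ↔
      (0 ≤ a₁ ∧ 0 ≤ a₂ ∧ b₁ ≤ 0 ∧ 0 ≤ b₂ ∧ 0 < b₂ - b₁) := by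
  obtain rfl : f = piecewiseQuadratic a₁ b₁ a₂ b₂ := funext hf
  simp only [apply_zero, true_and]
  constructor
  · rintro ⟨hmin, d, hd, hd0⟩
    obtain ⟨ha₁, ha₂⟩ := nonneg_coeffs_of_nonneg hmin
    have h0 : (0 : ℝ) ∈ fsubdiffR (piecewiseQuadratic a₁ b₁ a₂ b₂) 0 :=
      mem_fsubdiffR_of_forall_le (by simpa using hmin)
    rw [fsubdiffR_zero ha₁ ha₂] at hd h0
    obtain ⟨hb₁, hb₂⟩ := h0
    refine ⟨ha₁, ha₂, hb₁, hb₂, ?_⟩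
    rcases hd0.lt_or_gt with h | h <;> linarith [hd.1, hd.2]
  · rintro ⟨ha₁, ha₂, hb₁, hb₂, hgap⟩
    refine ⟨fun x => by simpa using mul_le ha₁ ha₂ hb₁ hb₂ x, ?_⟩
    rw [fsubdiffR_zero ha₁ ha₂]
    rcases eq_or_ne b₂ 0 with h | h
    · exact ⟨b₁, ⟨le_rfl, by linarith⟩, by linarith⟩
    · exact ⟨b₂, ⟨by linarith, le_rfl⟩, h⟩
end
end

section
/- Let f̃ = f + ι_{[λ₁,λ₂]} where f : ℝ → ℝ is a piecewise quadratic convex sparsity promoting function, λ₁ ≤ 0 ≤ λ₂, and ∂f(0) ∩ [λ₁,λ₂] contains a nonzero element. Then for all x ∈ [λ₁, λ₂] and α > 0, env_{αf̃}(x) = env_{αf}(x); consequently f̃ − env_{αf̃} = (f − env_{αf}) + ι_{[λ₁,λ₂]} and f̃ is sparsity promoting. -/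
open Set

noncomputable section

theorem stmt19 (a₁ b₁ a₂ b₂ α lam₁ lam₂ : ℝ) (hα : 0 < α)
    (ha₁ : 0 ≤ a₁) (ha₂ : 0 ≤ a₂) (hb₁ : b₁ ≤ 0) (hb₂ : 0 ≤ b₂)
    (hb : 0 < b₂ - b₁) (hlam₁ : lam₁ ≤ 0) (hlam₂ : 0 ≤ lam₂)
    (f : ℝ → ℝ)
    (hf : ∀ x, f x = if x ≤ 0 then a₁ / 2 * x ^ 2 + b₁ * x
                     else a₂ / 2 * x ^ 2 + b₂ * x)
    (hd : ∃ d : ℝ, d ≠ 0 ∧ d ∈ Set.Icc b₁ b₂ ∩ Set.Icc lam₁ lam₂) :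
    (∀ x ∈ Set.Icc lam₁ lam₂,
      sInf ((fun u => f u + (u - x) ^ 2 / (2 * α)) '' Set.Icc lam₁ lam₂)
        = sInf (Set.range fun u => f u + (u - x) ^ 2 / (2 * α))) ∧
    (f 0 = 0 ∧ (∀ x ∈ Set.Icc lam₁ lam₂, f 0 ≤ f x) ∧
      ∃ d : ℝ, d ≠ 0 ∧ ∀ y ∈ Set.Icc lam₁ lam₂, f 0 + d * y ≤ f y) := by
  have hf0 : f 0 = 0 := by simp [hf]
  have hfnn : ∀ x, 0 ≤ f x := by
    intro x
    rw [hf]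
    split_ifs with h
    · nlinarith
    · nlinarith [le_of_not_ge h]
  -- monotone decreasing on (-∞,0], increasing on [0,∞)
  have hdec : ∀ u v : ℝ, u ≤ v → v ≤ 0 → f v ≤ f u := by
    intro u v huv hv
    rw [hf u, hf v, if_pos hv, if_pos (huv.trans hv)]
    have h2 : v ^ 2 ≤ u ^ 2 := by
      nlinarith [mul_nonneg (sub_nonneg.2 huv) (neg_nonneg.2 (by linarith : u + v ≤ 0))]
    nlinarith [mul_le_mul_of_nonneg_left h2 (by linarith : (0:ℝ) ≤ a₁ / 2),
      mul_nonneg (neg_nonneg.2 hb₁) (sub_nonneg.2 huv)]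
  have hinc : ∀ u v : ℝ, 0 ≤ v → v ≤ u → f v ≤ f u := by
    intro u v hv hvu
    rcases eq_or_lt_of_le hv with h0 | h0
    · rw [← h0, hf0]; exact hfnn u
    · rw [hf u, hf v, if_neg (not_le.2 h0), if_neg (not_le.2 (h0.trans_le hvu))]
      nlinarith [mul_nonneg (mul_nonneg ha₂ hv) (sub_nonneg.2 hvu),
        mul_nonneg hb₂ (sub_nonneg.2 hvu)]
  refine ⟨?_, hf0, fun x _ => by rw [hf0]; exact hfnn x, ?_⟩
  · intro x hx
    obtain ⟨hx1, hx2⟩ := hx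
    set g : ℝ → ℝ := fun u => f u + (u - x) ^ 2 / (2 * α) with hg
    have hgnn : ∀ u, 0 ≤ g u := by
      intro u
      have : 0 ≤ (u - x) ^ 2 / (2 * α) := by positivity
      exact add_nonneg (hfnn u) this
    have h0mem : (0:ℝ) ∈ Set.Icc lam₁ lam₂ := ⟨hlam₁, hlam₂⟩
    have hne_im : ((fun u => f u + (u - x) ^ 2 / (2 * α)) '' Set.Icc lam₁ lam₂).Nonempty :=
      ⟨g 0, 0, h0mem, rfl⟩
    have hbdd_im : BddBelow ((fun u => f u + (u - x) ^ 2 / (2 * α)) '' Set.Icc lam₁ lam₂) :=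
      ⟨0, fun b ⟨u, _, hu⟩ => hu ▸ hgnn u⟩
    have hbdd_rg : BddBelow (Set.range fun u => f u + (u - x) ^ 2 / (2 * α)) :=
      ⟨0, fun b ⟨u, hu⟩ => hu ▸ hgnn u⟩
    apply le_antisymm
    · apply le_csInf (Set.range_nonempty _)
      rintro b ⟨u, rfl⟩
      -- find v in Icc with g v ≤ g u
      obtain ⟨v, hv, hfv, hsq⟩ : ∃ v ∈ Set.Icc lam₁ lam₂, f v ≤ f u ∧ (v - x)^2 ≤ (u - x)^2 := by
        rcases lt_or_ge u lam₁ with h | h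
        · exact ⟨lam₁, ⟨le_refl _, hlam₁.trans hlam₂⟩, hdec u lam₁ h.le hlam₁,
            by nlinarith⟩
        · rcases le_or_gt u lam₂ with h' | h'
          · exact ⟨u, ⟨h, h'⟩, le_refl _, le_refl _⟩
          · exact ⟨lam₂, ⟨hlam₁.trans hlam₂, le_refl _⟩, hinc u lam₂ hlam₂ h'.le,
              by nlinarith⟩
      calc sInf ((fun u => f u + (u - x) ^ 2 / (2 * α)) '' Set.Icc lam₁ lam₂)
          ≤ g v := csInf_le hbdd_im ⟨v, hv, rfl⟩
        _ ≤ g u := by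
            exact add_le_add hfv (by gcongr)
    · exact csInf_le_csInf hbdd_rg hne_im (Set.image_subset_range _ _)
  · obtain ⟨d, hd0, ⟨hdb1, hdb2⟩, _⟩ := hd
    refine ⟨d, hd0, fun y _ => ?_⟩
    rw [hf0, hf y, zero_add]
    split_ifs with h
    · nlinarith [mul_nonneg (sub_nonneg.2 hdb1) (neg_nonneg.2 h)]
    · nlinarith [mul_nonneg (sub_nonneg.2 hdb2) (le_of_not_ge h)]
end
end
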